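/- There exists a constant C > 0 such that for all t ≥ 1 and all s, s', θ, θ' ∈ ℝ with |s| + |s'| ≤ t, the series ∑_{n∈ℤ, n≠0} H(s, θ, s' + 2nt, θ') converges absolutely and ∑_{n≠0} |H(s, θ, s' + 2nt, θ')| ≤ C e^{|s| + |s'| − 2t}. -/

import Mathlib

open MeasureTheory Filter Real

/-- The covariance kernel `H(s,θ,s',θ') = log( max(e^{-s}, e^{-s'}) / |e^{-s+iθ} - e^{-s'+iθ'}| )`
of the lateral part of the GFF on the infinite cylinder `ℝ × S¹`. -/
noncomputable def Hker (s θ s' θ' : ℝ) : ℝ :=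
  Real.log (max (Real.exp (-s)) (Real.exp (-s')) /
    ‖Complex.exp (-(s : ℂ) + (θ : ℂ) * Complex.I)
      - Complex.exp (-(s' : ℂ) + (θ' : ℂ) * Complex.I)‖)

lemma Hker_symm (s θ s' θ' : ℝ) : Hker s θ s' θ' = Hker s' θ' s θ := by
  unfold Hker
  rw [max_comm, norm_sub_rev]

lemma abs_cexp (s θ : ℝ) :
    ‖Complex.exp (-(s : ℂ) + (θ : ℂ) * Complex.I)‖ = Real.exp (-s) := by
  rw [Complex.norm_exp]
  congr 1
  simp

/-- Pointwise bound in the ordered case `s ≤ s'`, `s' - s ≥ 1`. -/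
lemma Hker_abs_le_aux {s s' : ℝ} (θ θ' : ℝ) (h : 1 ≤ s' - s) :
    |Hker s θ s' θ'| ≤ 2 * Real.exp (-(s' - s)) := by
  set d : ℝ := s' - s with hd
  set x : ℝ := Real.exp (-d) with hx
  have hx0 : 0 < x := Real.exp_pos _
  have h2e : (2 : ℝ) ≤ Real.exp 1 := by
    have := Real.add_one_le_exp (1 : ℝ); linarith
  have hxhalf : x ≤ 1 / 2 := by
    have h1 : x ≤ Real.exp (-1) := Real.exp_le_exp.2 (by linarith)
    have h2 : Real.exp (-1) ≤ 1 / 2 := by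
      rw [Real.exp_neg]
      rw [inv_le_comm₀ (Real.exp_pos 1) (by norm_num)]
      linarith
    linarith
  set a : ℝ := Real.exp (-s) with ha
  set b : ℝ := Real.exp (-s') with hb
  have ha0 : 0 < a := Real.exp_pos _
  have hb0 : 0 < b := Real.exp_pos _
  have hba : b = a * x := by
    rw [ha, hb, hx, ← Real.exp_add]
    congr 1
    rw [hd]; ring
  have hblta : b < a := by
    rw [hba]
    nlinarith
  set z1 : ℂ := Complex.exp (-(s : ℂ) + (θ : ℂ) * Complex.I) with hz1
  set z2 : ℂ := Complex.exp (-(s' : ℂ) + (θ' : ℂ) * Complex.I) with hz2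
  have habs1 : ‖z1‖ = a := abs_cexp s θ
  have habs2 : ‖z2‖ = b := abs_cexp s' θ'
  set D : ℝ := ‖z1 - z2‖ with hD
  have hD1 : a - b ≤ D := by
    rw [← habs1, ← habs2]
    exact norm_sub_norm_le z1 z2
  have hD2 : D ≤ a + b := by
    rw [← habs1, ← habs2, hD]
    simpa [sub_eq_add_neg, norm_neg] using norm_add_le z1 (-z2)
  have hab0 : 0 < a - b := by linarith
  have hD0 : 0 < D := lt_of_lt_of_le hab0 hD1
  have hH : Hker s θ s' θ' = Real.log (a / D) := by
    unfold Hker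
    rw [← ha, ← hb, ← hz1, ← hz2, ← hD, max_eq_left hblta.le]
  have hlogdiv : Real.log (a / D) = Real.log a - Real.log D :=
    Real.log_div ha0.ne' hD0.ne'
  -- upper bound
  have hupper : Hker s θ s' θ' ≤ 2 * x := by
    have h1 : Real.log (a - b) ≤ Real.log D := Real.log_le_log hab0 hD1
    have h2 : Real.log (a - b) = Real.log a + Real.log (1 - x) := by
      have : a - b = a * (1 - x) := by rw [hba]; ring
      rw [this, Real.log_mul ha0.ne' (by nlinarith)]
    have hx1 : (0 : ℝ) < 1 - x := by linarith
    have h3 : Real.log ((1 - x)⁻¹) ≤ (1 - x)⁻¹ - 1 :=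
      Real.log_le_sub_one_of_pos (inv_pos.2 hx1)
    have h4 : (1 - x)⁻¹ - 1 = x / (1 - x) := by
      rw [eq_div_iff hx1.ne', sub_mul, inv_mul_cancel₀ hx1.ne']
      ring
    have h5 : x / (1 - x) ≤ 2 * x := by
      rw [div_le_iff₀ (by linarith)]
      nlinarith
    have h6 : Real.log ((1 - x)⁻¹) = -Real.log (1 - x) := Real.log_inv _
    rw [hH, hlogdiv]
    have := h3
    rw [h6, h4] at this
    linarith [h1, h2.symm.le]
  -- lower bound
  have hlower : -(2 * x) ≤ Hker s θ s' θ' := by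
    have h1 : Real.log D ≤ Real.log (a + b) := Real.log_le_log hD0 hD2
    have h2 : Real.log (a + b) = Real.log a + Real.log (1 + x) := by
      have : a + b = a * (1 + x) := by rw [hba]; ring
      rw [this, Real.log_mul ha0.ne' (by positivity)]
    have h3 : Real.log (1 + x) ≤ x := by
      have := Real.log_le_sub_one_of_pos (show (0:ℝ) < 1 + x by positivity)
      linarith
    rw [hH, hlogdiv]
    have hx2 : x ≤ 2 * x := by linarith
    linarith
  rw [abs_le]
  constructor <;> [linarith; linarith]

/-- Pointwise bound: if `|s - s'| ≥ 1` then `|Hker s θ s' θ'| ≤ 2 e^{-|s-s'|}`. -/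
lemma Hker_abs_le (s θ s' θ' : ℝ) (h : 1 ≤ |s - s'|) :
    |Hker s θ s' θ'| ≤ 2 * Real.exp (-|s - s'|) := by
  rcases le_total s s' with hle | hle
  · have h1 : |s - s'| = s' - s := by rw [abs_sub_comm]; exact abs_of_nonneg (by linarith)
    rw [h1] at h ⊢
    exact Hker_abs_le_aux θ θ' h
  · have h1 : |s - s'| = s - s' := abs_of_nonneg (by linarith)
    rw [h1] at h ⊢
    rw [Hker_symm]
    exact Hker_abs_le_aux θ' θ h

/-- there is a constant `C > 0` such that for all `t ≥ 1` and
`|s| + |s'| ≤ t`, the series `∑_{n≠0} H(s, θ, s' + 2nt, θ')` converges absolutely with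
`∑_{n≠0} |H(s, θ, s' + 2nt, θ')| ≤ C e^{|s| + |s'| - 2t}`. -/
theorem summable_Hker_translates :
    ∃ C : ℝ, 0 < C ∧ ∀ t : ℝ, 1 ≤ t → ∀ s s' θ θ' : ℝ, |s| + |s'| ≤ t →
      Summable (fun n : {n : ℤ // n ≠ 0} => |Hker s θ (s' + 2 * ((n : ℤ) : ℝ) * t) θ'|) ∧
      (∑' n : {n : ℤ // n ≠ 0}, |Hker s θ (s' + 2 * ((n : ℤ) : ℝ) * t) θ'|)
        ≤ C * Real.exp (|s| + |s'| - 2 * t) := by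
  refine ⟨64, by norm_num, fun t ht s s' θ θ' hst => ?_⟩
  set A : ℝ := |s| + |s'| with hA
  have hA0 : 0 ≤ A := by positivity
  have ht0 : 0 < t := by linarith
  set q : ℝ := Real.exp (-2) with hq
  have hq0 : 0 ≤ q := (Real.exp_pos _).le
  have hq1 : q < 1 := by
    rw [hq]; exact Real.exp_lt_one_iff.2 (by norm_num)
  have hqhalf : q ≤ 1 / 2 := by
    have h2e : (2 : ℝ) ≤ Real.exp 1 := by
      have := Real.add_one_le_exp (1 : ℝ); linarith
    have h1 : q ≤ Real.exp (-1) := Real.exp_le_exp.2 (by norm_num)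
    have h2 : Real.exp (-1) ≤ 1 / 2 := by
      rw [Real.exp_neg]
      rw [inv_le_comm₀ (Real.exp_pos 1) (by norm_num)]
      linarith
    linarith
  set c : ℝ := 16 * Real.exp (A - 2 * t) with hc
  have hc0 : 0 ≤ c := by positivity
  set h : ℤ → ℝ := fun n => c * q ^ n.natAbs with hh
  -- key pointwise bound
  have key : ∀ n : ℤ, n ≠ 0 → |Hker s θ (s' + 2 * (n : ℝ) * t) θ'| ≤ h n := by
    intro n hn
    set m : ℕ := n.natAbs with hm
    have hm1 : 1 ≤ m := Int.natAbs_pos.mpr hn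
    have hnabs : |(n : ℝ)| = (m : ℝ) := by
      rw [← Int.cast_abs, Int.abs_eq_natAbs, ← hm]
      norm_cast
    have hm1' : (1 : ℝ) ≤ (m : ℝ) := by exact_mod_cast hm1
    set d : ℝ := |s - (s' + 2 * (n : ℝ) * t)| with hd
    have hss' : |s - s'| ≤ A := (abs_sub _ _).trans le_rfl
    have hd1 : 2 * (m : ℝ) * t - A ≤ d := by
      have h1 : |2 * (n : ℝ) * t| - |s - s'| ≤ |(s - s') - 2 * (n : ℝ) * t| := by
        have := abs_sub_abs_le_abs_sub (2 * (n : ℝ) * t) (s - s')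
        calc |2 * (n : ℝ) * t| - |s - s'| ≤ |2 * (n : ℝ) * t - (s - s')| := this
          _ = |(s - s') - 2 * (n : ℝ) * t| := abs_sub_comm _ _
      have h2 : |2 * (n : ℝ) * t| = 2 * (m : ℝ) * t := by
        rw [abs_mul, abs_mul, abs_of_nonneg (by norm_num : (0:ℝ) ≤ 2), abs_of_pos ht0, hnabs]
      have h3 : (s - (s' + 2 * (n : ℝ) * t)) = (s - s') - 2 * (n : ℝ) * t := by ring
      rw [hd, h3]
      linarith
    have hd2 : 1 ≤ d := by nlinarith
    have hb := Hker_abs_le s θ (s' + 2 * (n : ℝ) * t) θ' hd2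
    have hstep : 2 * Real.exp (-d) ≤ h n := by
      show 2 * Real.exp (-d) ≤ c * q ^ m
      have hqm : q ^ m = Real.exp (-(2 : ℝ) * m) := by
        rw [hq, ← Real.exp_nat_mul]
        congr 1; ring
      have hrhs : c * q ^ m = 16 * Real.exp (A - 2 * t + -(2:ℝ) * m) := by
        rw [hc, hqm, mul_assoc, ← Real.exp_add]
      rw [hrhs]
      have hexp2 : Real.exp (2 : ℝ) ≤ 8 := by
        have h1 : Real.exp (1 : ℝ) < 2.7182818286 := Real.exp_one_lt_d9
        have h2 : Real.exp (2 : ℝ) = Real.exp 1 * Real.exp 1 := by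
          rw [← Real.exp_add]; norm_num
        nlinarith [Real.exp_pos (1 : ℝ)]
      have hexpo : -d ≤ (A - 2 * t + -(2:ℝ) * m) + 2 := by nlinarith
      calc 2 * Real.exp (-d) ≤ 2 * Real.exp ((A - 2 * t + -(2:ℝ) * m) + 2) := by
            have := Real.exp_le_exp.2 hexpo; linarith
        _ = 2 * Real.exp 2 * Real.exp (A - 2 * t + -(2:ℝ) * m) := by
            rw [Real.exp_add]; ring
        _ ≤ 16 * Real.exp (A - 2 * t + -(2:ℝ) * m) := by
            have := (Real.exp_pos (A - 2 * t + -(2:ℝ) * m)).le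
            nlinarith
    exact hb.trans hstep
  -- summability of the majorant over ℤ
  have hsum_nat : Summable (fun n : ℕ => c * q ^ n) :=
    (summable_geometric_of_lt_one hq0 hq1).mul_left c
  have hsum1 : Summable (fun n : ℕ => h (n : ℤ)) := by
    have : (fun n : ℕ => h (n : ℤ)) = fun n : ℕ => c * q ^ n := by
      funext n; simp [hh]
    rw [this]; exact hsum_nat
  have hsum2 : Summable (fun n : ℕ => h (-(n : ℤ))) := by
    have : (fun n : ℕ => h (-(n : ℤ))) = fun n : ℕ => c * q ^ n := by
      funext n; simp [hh]
    rw [this]; exact hsum_nat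
  have hsumZ : Summable h := Summable.of_nat_of_neg hsum1 hsum2
  have hnonneg : ∀ n : ℤ, 0 ≤ h n := fun n => by positivity
  -- summability of the series
  have hsub : Summable (fun n : {n : ℤ // n ≠ 0} => h (n : ℤ)) :=
    hsumZ.subtype {n : ℤ | n ≠ 0}
  have hsummable :
      Summable (fun n : {n : ℤ // n ≠ 0} => |Hker s θ (s' + 2 * ((n : ℤ) : ℝ) * t) θ'|) := by
    refine Summable.of_nonneg_of_le (fun n => abs_nonneg _) (fun n => key n n.2) hsub
  refine ⟨hsummable, ?_⟩
  -- tsum bound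
  have hts1 : (∑' n : {n : ℤ // n ≠ 0}, |Hker s θ (s' + 2 * ((n : ℤ) : ℝ) * t) θ'|)
      ≤ ∑' n : {n : ℤ // n ≠ 0}, h (n : ℤ) :=
    Summable.tsum_le_tsum (fun n => key n n.2) hsummable hsub
  have hts2 : (∑' n : {n : ℤ // n ≠ 0}, h (n : ℤ)) ≤ ∑' n : ℤ, h n :=
    Summable.tsum_subtype_le h {n : ℤ | n ≠ 0} hnonneg hsumZ
  have htsZ : (∑' n : ℤ, h n) ≤ 4 * c := by
    rw [Summable.tsum_of_nat_of_neg hsum1 hsum2]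
    have e1 : (∑' n : ℕ, h (n : ℤ)) = c * (1 - q)⁻¹ := by
      have : (fun n : ℕ => h (n : ℤ)) = fun n : ℕ => c * q ^ n := by
        funext n; simp [hh]
      rw [this, tsum_mul_left, tsum_geometric_of_lt_one hq0 hq1]
    have e2 : (∑' n : ℕ, h (-(n : ℤ))) = c * (1 - q)⁻¹ := by
      have : (fun n : ℕ => h (-(n : ℤ))) = fun n : ℕ => c * q ^ n := by
        funext n; simp [hh]
      rw [this, tsum_mul_left, tsum_geometric_of_lt_one hq0 hq1]
    have e3 : (1 - q)⁻¹ ≤ 2 := by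
      rw [inv_le_comm₀ (by linarith) (by norm_num)]
      linarith
    have h0 : h 0 = c := by simp [hh]
    rw [e1, e2, h0]
    nlinarith
  have : (∑' n : {n : ℤ // n ≠ 0}, |Hker s θ (s' + 2 * ((n : ℤ) : ℝ) * t) θ'|) ≤ 4 * c :=
    hts1.trans (hts2.trans htsZ)
  calc (∑' n : {n : ℤ // n ≠ 0}, |Hker s θ (s' + 2 * ((n : ℤ) : ℝ) * t) θ'|) ≤ 4 * c := this
    _ = 64 * Real.exp (A - 2 * t) := by rw [hc]; ring
    _ = 64 * Real.exp (|s| + |s'| - 2 * t) := by rw [hA]
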